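/- arXiv:2403.06849 — 2 statements merged into one kernel-verified Lean document; each statement's English description precedes it below -/
import Mathlib

section
/- Let G be a group, let a, c ∈ G satisfy orderOf a = 2, orderOf c = 2, orderOf (a * c) = 7, and let b ∈ G be an arbitrary element. Then there exists an element s of the subgroup generated by {a, c} such that s * s = 1, s ∉ {a, b, c}, orderOf (a * s) = 7, and orderOf (c * s) = 7. -/
/-!
Both `c a c` and `a c a` are reflections of the dihedral group `⟨a, c⟩`. With `t = a c`,
`a (c a c) = t²` and `c (c a c) = t`, and symmetrically `a (a c a) = t⁻¹` and
`c (a c a) = t⁻²`; as `t` has odd order `n > 3`, all of these have order `n` again.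
Since `(a c a)(c a c) = t³ ≠ 1` the two candidates differ, so one of them avoids `b`.
-/

section DihedralPair

variable {G : Type*} [Group G] {a c : G}

lemma mul_self_eq_one_of_orderOf_eq_two {x : G} (h : orderOf x = 2) : x * x = 1 := by
  rw [← sq, ← h, pow_orderOf_eq_one]

lemma orderOf_sq_of_odd {x : G} (hx : Odd (orderOf x)) : orderOf (x ^ 2) = orderOf x :=
  hx.coprime_two_right.orderOf_pow

lemma orderOf_mul_comm_of_mul_self_eq_one (ha : a * a = 1) (hc : c * c = 1) :
    orderOf (c * a) = orderOf (a * c) := by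
  rw [← orderOf_inv (a * c), mul_inv_rev, inv_eq_of_mul_eq_one_right ha,
    inv_eq_of_mul_eq_one_right hc]

lemma conj_mem_closure_pair (a c : G) : c * a * c ∈ Subgroup.closure ({a, c} : Set G) := by
  have ha : a ∈ Subgroup.closure ({a, c} : Set G) := Subgroup.subset_closure (by simp)
  have hc : c ∈ Subgroup.closure ({a, c} : Set G) := Subgroup.subset_closure (by simp)
  exact mul_mem (mul_mem hc ha) hc

lemma conj_mul_self (ha : a * a = 1) (hc : c * c = 1) : c * a * c * (c * a * c) = 1 := by
  simp only [mul_assoc, ← mul_assoc c c, hc, one_mul, ← mul_assoc a a, ha]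

lemma mul_conj_left (a c : G) : a * (c * a * c) = (a * c) ^ 2 := by
  rw [sq]; group

lemma mul_conj_right (hc : c * c = 1) : c * (c * a * c) = a * c := by
  rw [← mul_assoc, ← mul_assoc, hc, one_mul]

lemma conj_ne_left (ha : a * a = 1) (h : (a * c) ^ 2 ≠ 1) : c * a * c ≠ a := by
  intro hca
  rw [← mul_conj_left, hca, ha] at h
  exact h rfl

lemma conj_ne_right (h : a * c ≠ 1) : c * a * c ≠ c := by
  intro hca
  exact h (mul_left_cancel (a := c) (by rw [← mul_assoc, hca, mul_one]))

lemma conj_ne_conj (ha : a * a = 1) (hc : c * c = 1) (h : (a * c) ^ 3 ≠ 1) :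
    c * a * c ≠ a * c * a := by
  intro hca
  apply h
  calc (a * c) ^ 3 = a * c * a * (c * a * c) := by
        simp only [pow_succ, pow_zero, one_mul, mul_assoc]
    _ = 1 := by rw [hca, conj_mul_self hc ha]

lemma conj_reflection_of_odd_orderOf (ha : a * a = 1) (hc : c * c = 1)
    (hodd : Odd (orderOf (a * c))) (hn : 3 < orderOf (a * c)) :
    c * a * c ∈ Subgroup.closure ({a, c} : Set G) ∧ c * a * c * (c * a * c) = 1 ∧
      c * a * c ≠ a ∧ c * a * c ≠ c ∧
      orderOf (a * (c * a * c)) = orderOf (a * c) ∧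
      orderOf (c * (c * a * c)) = orderOf (a * c) := by
  have hne : a * c ≠ 1 := by
    simpa using pow_ne_one_of_lt_orderOf one_ne_zero (by omega : 1 < orderOf (a * c))
  exact ⟨conj_mem_closure_pair a c, conj_mul_self ha hc,
    conj_ne_left ha (pow_ne_one_of_lt_orderOf two_ne_zero (by omega)), conj_ne_right hne,
    by rw [mul_conj_left, orderOf_sq_of_odd hodd], by rw [mul_conj_right hc]⟩

end DihedralPair

/-- Given two involutions `a`, `c` whose product has order 7 and an arbitrary
element `b`, there is an involution `s` in the dihedral subgroup `⟨a, c⟩`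
distinct from `a`, `b`, `c` with `orderOf (a * s) = orderOf (c * s) = 7`. -/
theorem exists_reflection {G : Type*} [Group G] (a c : G)
    (ha : orderOf a = 2) (hc : orderOf c = 2) (hac : orderOf (a * c) = 7)
    (b : G) :
    ∃ s ∈ Subgroup.closure ({a, c} : Set G),
      s * s = 1 ∧ s ∉ ({a, b, c} : Set G) ∧
      orderOf (a * s) = 7 ∧ orderOf (c * s) = 7 := by
  have ha' := mul_self_eq_one_of_orderOf_eq_two ha
  have hc' := mul_self_eq_one_of_orderOf_eq_two hc
  have hca : orderOf (c * a) = 7 := by rw [orderOf_mul_comm_of_mul_self_eq_one ha' hc', hac]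
  have hdistinct : c * a * c ≠ a * c * a :=
    conj_ne_conj ha' hc' (pow_ne_one_of_lt_orderOf three_ne_zero (by omega))
  by_cases hb : b = c * a * c
  · obtain ⟨hmem, hsq, hnc, hna, hoc, hoa⟩ :=
      conj_reflection_of_odd_orderOf hc' ha' (by rw [hca]; decide) (by omega)
    refine ⟨a * c * a, by rwa [Set.pair_comm], hsq, ?_, by rw [hoa, hca], by rw [hoc, hca]⟩
    simp only [Set.mem_insert_iff, Set.mem_singleton_iff, hb, not_or]
    exact ⟨hna, hdistinct.symm, hnc⟩
  · obtain ⟨hmem, hsq, hna, hnc, hoa, hoc⟩ :=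
      conj_reflection_of_odd_orderOf ha' hc' (by rw [hac]; decide) (by omega)
    refine ⟨c * a * c, hmem, hsq, ?_, by rw [hoa, hac], by rw [hoc, hac]⟩
    simp only [Set.mem_insert_iff, Set.mem_singleton_iff, not_or]
    exact ⟨hna, Ne.symm hb, hnc⟩
end

section
/- Let G be a finite group generated by elements a, b, c satisfying a² = b² = c² = 1, (a*b)² = 1, (b*c)³ = 1, and such that orderOf a = 2, orderOf c = 2 and orderOf (c * a) = 7. Then there exist an integer x ≥ 2, an element s ∈ G with s * s = 1 and s ∉ {a, b, c}, and a surjective group homomorphism ψ : C_x →* G, where C_x is the presented group with generators r₁, r₂, r₃, r₄ and relators r₁², r₂², r₃², r₄², (r₁r₂)², (r₂r₃)³, (r₃r₁)⁷, (r₁r₄)⁷, (r₂r₄)ˣ, (r₃r₄)⁷, such that ψ(r₁) = a, ψ(r₂) = b, ψ(r₃) = c, ψ(r₄) = s, orderOf (a * s) = 7, orderOf (c * s) = 7, and x = orderOf (b * s). -/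
/-- The relators of the Coxeter group `C_x` of the truncated hyperbolic
tetrahedron `T_x`. -/
def tetrahedralRels (x : ℕ) : Set (FreeGroup (Fin 4)) :=
  {(FreeGroup.of 0) ^ 2, (FreeGroup.of 1) ^ 2, (FreeGroup.of 2) ^ 2,
   (FreeGroup.of 3) ^ 2,
   (FreeGroup.of 0 * FreeGroup.of 1) ^ 2,
   (FreeGroup.of 1 * FreeGroup.of 2) ^ 3,
   (FreeGroup.of 2 * FreeGroup.of 0) ^ 7,
   (FreeGroup.of 0 * FreeGroup.of 3) ^ 7,
   (FreeGroup.of 1 * FreeGroup.of 3) ^ x,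
   (FreeGroup.of 2 * FreeGroup.of 3) ^ 7}

/-- The Coxeter group `C_x` of the truncated hyperbolic tetrahedron `T_x`. -/
def Cx (x : ℕ) : Type := PresentedGroup (tetrahedralRels x)

instance (x : ℕ) : Group (Cx x) := by unfold Cx; infer_instance

/-!
Put `t = c * a`, a rotation of order `7` in the dihedral group `⟨a, c⟩`, and take for `s` a
reflection `a * t ^ k` of that group. Then `a * s = t ^ k` and `c * s = t ^ (k + 1)`, which
have order `7` for `k = 1, 2`; since `t ≠ 1`, one of these two reflections differs from `b`.
All relators of `C_x` then hold for `x = orderOf (b * s)`, and the resulting homomorphism is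
onto because `a, b, c` already generate `G`.
-/

section

variable {G : Type*} [Group G]

theorem mul_eq_one_iff_eq_of_sq_eq_one {a s : G} (ha : a ^ 2 = 1) : a * s = 1 ↔ s = a := by
  rw [mul_eq_one_iff_inv_eq, inv_eq_of_mul_eq_one_right (by rw [← sq, ha]), eq_comm]

theorem mul_pow_mul_sq_eq_one {a c : G} (ha : a ^ 2 = 1) (hc : c ^ 2 = 1) (k : ℕ) :
    (a * (c * a) ^ k) ^ 2 = 1 := by
  have ha' : a⁻¹ = a := inv_eq_of_mul_eq_one_right (by rw [← sq, ha])
  have hc' : c⁻¹ = c := inv_eq_of_mul_eq_one_right (by rw [← sq, hc])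
  calc (a * (c * a) ^ k) ^ 2 = (a * (c * a) * a⁻¹) ^ k * (c * a) ^ k := by
        rw [conj_pow, ha', sq]; group
    _ = ((c * a) ^ k)⁻¹ * (c * a) ^ k := by
        rw [← mul_assoc, mul_inv_cancel_right, ← inv_pow, mul_inv_rev, ha', hc']
    _ = 1 := inv_mul_cancel _

theorem mul_ne_or_mul_sq_ne (a b : G) {t : G} (ht : t ≠ 1) : a * t ≠ b ∨ a * t ^ 2 ≠ b := by
  by_contra! ⟨h1, h2⟩
  rw [← h1, sq, ← mul_assoc, mul_eq_left] at h2
  exact ht h2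

theorem two_le_orderOf [Finite G] {g : G} (hg : g ≠ 1) : 2 ≤ orderOf g := by
  have hpos := orderOf_pos g
  have hne := mt orderOf_eq_one_iff.mp hg
  omega

end

theorem Cx.exists_surjective_hom {G : Type*} [Group G] {x : ℕ} {a b c s : G}
    (ha : a ^ 2 = 1) (hb : b ^ 2 = 1) (hc : c ^ 2 = 1) (hs : s ^ 2 = 1)
    (hab : (a * b) ^ 2 = 1) (hbc : (b * c) ^ 3 = 1) (hca : (c * a) ^ 7 = 1)
    (has : (a * s) ^ 7 = 1) (hbs : (b * s) ^ x = 1) (hcs : (c * s) ^ 7 = 1)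
    (hgen : Subgroup.closure ({a, b, c} : Set G) = ⊤) :
    ∃ ψ : Cx x →* G, Function.Surjective ψ ∧
      ψ (PresentedGroup.of 0) = a ∧ ψ (PresentedGroup.of 1) = b ∧
      ψ (PresentedGroup.of 2) = c ∧ ψ (PresentedGroup.of 3) = s := by
  have hrels : ∀ r ∈ tetrahedralRels x, FreeGroup.lift ![a, b, c, s] r = 1 := by
    simp only [tetrahedralRels, Set.mem_insert_iff, Set.mem_singleton_iff]
    rintro r (rfl | rfl | rfl | rfl | rfl | rfl | rfl | rfl | rfl | rfl) <;> simp [*]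
  refine ⟨PresentedGroup.toGroup hrels, ?_, PresentedGroup.toGroup.of hrels,
    PresentedGroup.toGroup.of hrels, PresentedGroup.toGroup.of hrels,
    PresentedGroup.toGroup.of hrels⟩
  refine (MonoidHom.range_eq_top (f := (PresentedGroup.toGroup hrels : PresentedGroup _ →* G))).1 ?_
  rw [eq_top_iff, ← hgen, Subgroup.closure_le]
  rintro g (rfl | rfl | rfl)
  exacts [⟨_, PresentedGroup.toGroup.of hrels (x := 0)⟩,
    ⟨_, PresentedGroup.toGroup.of hrels (x := 1)⟩, ⟨_, PresentedGroup.toGroup.of hrels (x := 2)⟩]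

theorem exists_extension_to_Cx_general {G : Type*} [Group G] [Finite G] (a b c : G)
    (ha2 : a ^ 2 = 1) (hb2 : b ^ 2 = 1) (hc2 : c ^ 2 = 1)
    (hab : (a * b) ^ 2 = 1) (hbc : (b * c) ^ 3 = 1)
    (hca : orderOf (c * a) = 7)
    (hgen : Subgroup.closure ({a, b, c} : Set G) = ⊤) :
    ∃ (x : ℕ), 2 ≤ x ∧ ∃ s : G, s * s = 1 ∧ s ∉ ({a, b, c} : Set G) ∧
      orderOf (a * s) = 7 ∧ orderOf (c * s) = 7 ∧ x = orderOf (b * s) ∧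
      ∃ ψ : Cx x →* G, Function.Surjective ψ ∧
        ψ (PresentedGroup.of 0) = a ∧ ψ (PresentedGroup.of 1) = b ∧
        ψ (PresentedGroup.of 2) = c ∧ ψ (PresentedGroup.of 3) = s := by
  have hca1 : c * a ≠ 1 := fun h => by simp [h] at hca
  obtain ⟨k, hk, hk1, hkb⟩ : ∃ k : ℕ, orderOf ((c * a) ^ k) = 7 ∧
      orderOf ((c * a) ^ (k + 1)) = 7 ∧ a * (c * a) ^ k ≠ b := by
    have hcop : ∀ k, Nat.Coprime 7 k → orderOf ((c * a) ^ k) = 7 := fun k hk => by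
      rw [Nat.Coprime.orderOf_pow (by rwa [hca]), hca]
    rcases mul_ne_or_mul_sq_ne a b hca1 with h | h
    · exact ⟨1, hcop 1 (by decide), hcop 2 (by decide), by rwa [pow_one]⟩
    · exact ⟨2, hcop 2 (by decide), hcop 3 (by decide), h⟩
  set s := a * (c * a) ^ k
  have has : a * s = (c * a) ^ k := by rw [← mul_assoc, ← sq, ha2, one_mul]
  have hcs : c * s = (c * a) ^ (k + 1) := by rw [← mul_assoc, pow_succ']
  have hs2 : s ^ 2 = 1 := mul_pow_mul_sq_eq_one ha2 hc2 k
  have hne : ∀ {g : G}, g ^ 2 = 1 → orderOf (g * s) = 7 → s ≠ g := fun hg h7 hsg =>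
    by simp [(mul_eq_one_iff_eq_of_sq_eq_one hg).2 hsg] at h7
  have hbs : b * s ≠ 1 := mt (mul_eq_one_iff_eq_of_sq_eq_one hb2).1 hkb
  refine ⟨orderOf (b * s), two_le_orderOf hbs, s, by rwa [← sq], ?_, has ▸ hk, hcs ▸ hk1, rfl,
    Cx.exists_surjective_hom ha2 hb2 hc2 hs2 hab hbc (hca ▸ pow_orderOf_eq_one _)
      (hk ▸ has ▸ pow_orderOf_eq_one _) (pow_orderOf_eq_one _)
      (hk1 ▸ hcs ▸ pow_orderOf_eq_one _) hgen⟩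
  simp only [Set.mem_insert_iff, Set.mem_singleton_iff, not_or]
  exact ⟨hne ha2 (has ▸ hk), hkb, hne hc2 (hcs ▸ hk1)⟩

/-- The group-theoretic core of the proof of Theorem 1: a finite quotient of
the extended triangle group `[2,3,7]` (with the generators keeping their
orders) receives a surjection from a Coxeter group `C_x` extending the given
one. -/
theorem exists_extension_to_Cx {G : Type*} [Group G] [Finite G] (a b c : G)
    (ha2 : a ^ 2 = 1) (hb2 : b ^ 2 = 1) (hc2 : c ^ 2 = 1)
    (hab : (a * b) ^ 2 = 1) (hbc : (b * c) ^ 3 = 1)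
    (ha : orderOf a = 2) (hc : orderOf c = 2) (hca : orderOf (c * a) = 7)
    (hgen : Subgroup.closure ({a, b, c} : Set G) = ⊤) :
    ∃ (x : ℕ), 2 ≤ x ∧ ∃ s : G, s * s = 1 ∧ s ∉ ({a, b, c} : Set G) ∧
      orderOf (a * s) = 7 ∧ orderOf (c * s) = 7 ∧ x = orderOf (b * s) ∧
      ∃ ψ : Cx x →* G, Function.Surjective ψ ∧
        ψ (PresentedGroup.of 0) = a ∧ ψ (PresentedGroup.of 1) = b ∧
        ψ (PresentedGroup.of 2) = c ∧ ψ (PresentedGroup.of 3) = s :=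
  exists_extension_to_Cx_general a b c ha2 hb2 hc2 hab hbc hca hgen
end
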